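/- There exist a constant c > 0 and an integer N such that for all integers n ≥ N and all even integers m ≥ N, the zero-error randomized query complexity satisfies R0(g_{n,m}) ≥ c·n·m. -/

import Mathlib

open Classical
open scoped ENNReal

set_option maxHeartbeats 1000000

/-! ### Deterministic decision trees -/

inductive DTree (ι σ : Type) : Type
  | leaf (b : Bool) : DTree ι σ
  | node (v : ι) (child : σ → DTree ι σ) : DTree ι σ

namespace DTree

variable {ι σ : Type}

/-- The output of the decision tree on input `x`. -/
def eval (x : ι → σ) : DTree ι σ → Bool
  | leaf b => b
  | node v child => (child (x v)).eval x

/-- The list of variables queried by the decision tree on input `x`,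
in the order they are queried. -/
def queryList (x : ι → σ) : DTree ι σ → List ι
  | leaf _ => []
  | node v child => v :: (child (x v)).queryList x

/-- The cost of the decision tree on input `x`: the number of internal nodes visited. -/
def cost (T : DTree ι σ) (x : ι → σ) : ℕ := (T.queryList x).length

/-- `T` computes `f` if it outputs `f x` on every input `x`. -/
def Computes (T : DTree ι σ) (f : (ι → σ) → Bool) : Prop := ∀ x, T.eval x = f x

end DTree

/-- Deterministic query complexity. -/
noncomputable def detComplexity {ι σ : Type} (f : (ι → σ) → Bool) : ℕ :=
  sInf {d : ℕ | ∃ T : DTree ι σ, T.Computes f ∧ ∀ x, T.cost x ≤ d}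

/-- Expected cost of a randomized decision tree (a distribution over deterministic
decision trees) on input `x`. -/
noncomputable def expCost {ι σ : Type} (μ : PMF (DTree ι σ)) (x : ι → σ) : ℝ≥0∞ :=
  ∑' T : DTree ι σ, μ T * (T.cost x : ℝ≥0∞)

/-- Zero-error (Las Vegas) randomized query complexity. -/
noncomputable def R0query {ι σ : Type} (f : (ι → σ) → Bool) : ℝ≥0∞ :=
  ⨅ μ ∈ {μ : PMF (DTree ι σ) | ∀ T ∈ μ.support, T.Computes f},
    ⨆ x : ι → σ, expCost μ x

/-- One-sided error randomized query complexity. -/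
noncomputable def R1query {ι σ : Type} (f : (ι → σ) → Bool) : ℝ≥0∞ :=
  ⨅ μ ∈ {μ : PMF (DTree ι σ) |
      (∀ x, f x = false → ∀ T ∈ μ.support, T.eval x = false) ∧
      (∀ x, f x = true → 1 / 2 ≤ ∑' T : DTree ι σ, if T.eval x = true then μ T else 0)},
    ⨆ x : ι → σ, expCost μ x

/-- Bounded-error (Monte Carlo) randomized query complexity. -/
noncomputable def Rquery {ι σ : Type} (f : (ι → σ) → Bool) : ℝ≥0∞ :=
  ⨅ μ ∈ {μ : PMF (DTree ι σ) |
      ∀ x, 9 / 10 ≤ ∑' T : DTree ι σ, if T.eval x = f x then μ T else 0},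
    ⨆ x : ι → σ, expCost μ x
/-! ### Quantum query algorithms -/

/-- The standard quantum query oracle `O_x |j,p⟩|w⟩ = |j, p + x_j mod S⟩|w⟩`,
as a matrix. -/
noncomputable def qOracle {V ω : Type} [DecidableEq V] [DecidableEq ω] {S : ℕ}
    (x : V → Fin S) : Matrix (V × Fin S × ω) (V × Fin S × ω) ℂ :=
  fun r c => if r = (c.1, c.2.1 + x c.1, c.2.2) then 1 else 0

/-- A quantum query algorithm on inputs `x : V → Fin S`, making `queries` queries, with
workspace `Fin (W+1)`, alternating the unitaries `U 0, …, U queries` with the oracle,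
and measuring with the projector `P` at the end. -/
structure QAlg (V : Type) [Fintype V] [DecidableEq V] (S : ℕ) [NeZero S] where
  queries : ℕ
  W : ℕ
  init : V
  U : ℕ → Matrix (V × Fin S × Fin (W + 1)) (V × Fin S × Fin (W + 1)) ℂ
  hU : ∀ t, (U t).conjTranspose * U t = 1 ∧ U t * (U t).conjTranspose = 1
  P : Matrix (V × Fin S × Fin (W + 1)) (V × Fin S × Fin (W + 1)) ℂ
  hP : P.conjTranspose = P ∧ P * P = P

namespace QAlg

variable {V : Type} [Fintype V] [DecidableEq V] {S : ℕ} [NeZero S]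

/-- The state of the quantum algorithm after `t` steps on input `x`. -/
noncomputable def state (A : QAlg V S) (x : V → Fin S) :
    ℕ → (V × Fin S × Fin (A.W + 1) → ℂ)
  | 0 => (A.U 0).mulVec fun r => if r = (A.init, 0, 0) then 1 else 0
  | t + 1 => (A.U (t + 1)).mulVec ((qOracle x).mulVec (A.state x t))

/-- The probability that the algorithm accepts input `x`: `‖P |Ψ_x⟩‖²`. -/
noncomputable def acceptProb (A : QAlg V S) (x : V → Fin S) : ℝ :=
  ∑ r : V × Fin S × Fin (A.W + 1), Complex.normSq (A.P.mulVec (A.state x A.queries) r)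

end QAlg

/-- Bounded-error quantum query complexity (for functions over a finite input
alphabet `σ`, identified with `Fin (card σ)` via a fixed bijection). -/
noncomputable def Qquery {V σ : Type} [Fintype V] [DecidableEq V] [Fintype σ] [Nonempty σ]
    (f : (V → σ) → Bool) : ℕ :=
  letI : NeZero (Fintype.card σ) := ⟨Fintype.card_ne_zero⟩
  sInf {t : ℕ | ∃ A : QAlg V (Fintype.card σ), A.queries = t ∧
    ∀ x : V → σ,
      (f x = true → 9 / 10 ≤ A.acceptProb fun j => Fintype.equivFin σ (x j)) ∧
      (f x = false → A.acceptProb (fun j => Fintype.equivFin σ (x j)) ≤ 1 / 10)}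

/-- Exact quantum query complexity. -/
noncomputable def QEquery {V σ : Type} [Fintype V] [DecidableEq V] [Fintype σ] [Nonempty σ]
    (f : (V → σ) → Bool) : ℕ :=
  letI : NeZero (Fintype.card σ) := ⟨Fintype.card_ne_zero⟩
  sInf {t : ℕ | ∃ A : QAlg V (Fintype.card σ), A.queries = t ∧
    ∀ x : V → σ,
      (f x = true → A.acceptProb (fun j => Fintype.equivFin σ (x j)) = 1) ∧
      (f x = false → A.acceptProb (fun j => Fintype.equivFin σ (x j)) = 0)}

/-- Approximate degree of a boolean function. -/
noncomputable def adeg {ι : Type} (F : (ι → Bool) → Bool) : ℕ :=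
  sInf {d : ℕ | ∃ p : MvPolynomial ι ℝ, p.totalDegree ≤ d ∧
    ∀ y : ι → Bool, |MvPolynomial.eval (fun i => if y i then (1 : ℝ) else 0) p -
      (if F y then 1 else 0)| ≤ 1 / 10}
/-! ### The pointer functions of Göös–Pitassi–Watson type -/

/-- A symbol of the input alphabet: a boolean value, a left pointer, a right pointer,
and a back/internal pointer (to a cell or a column, depending on `β`). -/
structure PSym (n m : ℕ) (β : Type) where
  val : Bool
  lp : Option (Fin n × Fin m)
  rp : Option (Fin n × Fin m)
  bp : Option β
deriving DecidableEq

/-- The all-ones symbol `(1,⊥,⊥,⊥)`. -/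
def PSym.one (n m : ℕ) (β : Type) : PSym n m β := ⟨true, none, none, none⟩

/-- The symbol `(0,⊥,⊥,⊥)`. -/
def PSym.zero (n m : ℕ) (β : Type) : PSym n m β := ⟨false, none, none, none⟩

def PSym.equivProd (n m : ℕ) (β : Type) :
    PSym n m β ≃ Bool × Option (Fin n × Fin m) × Option (Fin n × Fin m) × Option β where
  toFun v := (v.val, v.lp, v.rp, v.bp)
  invFun p := ⟨p.1, p.2.1, p.2.2.1, p.2.2.2⟩
  left_inv _ := rfl
  right_inv _ := rfl

instance {n m : ℕ} {β : Type} [Fintype β] : Fintype (PSym n m β) :=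
  Fintype.ofEquiv _ (PSym.equivProd n m β).symm

instance {n m : ℕ} {β : Type} : Nonempty (PSym n m β) := ⟨PSym.one n m β⟩

/-- The sequence of k bits of `j`, most significant first:  the root-to-leaf path
(`false` = left, `true` = right) of the `j`-th leaf in the complete binary tree of depth `k`. -/
def bitsPath (k j : ℕ) : List Bool :=
  ((List.range k).reverse).map fun i => j.testBit i

/-- The root-to-leaf path of the leaf labeled `j` (0-indexed) in the balanced binary tree
with `m` leaves: the complete binary tree if `m` is a power of 2, and otherwise the complete
binary tree on `2 ^ ⌊log₂ m⌋` leaves with a pair of children added to each of the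
`m - 2 ^ ⌊log₂ m⌋` leftmost leaves. -/
def treePath (m j : ℕ) : List Bool :=
  if m - 2 ^ Nat.log 2 m = 0 then bitsPath (Nat.log 2 m) j
  else if j < 2 * (m - 2 ^ Nat.log 2 m) then
    bitsPath (Nat.log 2 m) (j / 2) ++ [j % 2 == 1]
  else bitsPath (Nat.log 2 m) (j - (m - 2 ^ Nat.log 2 m))

/-- Starting at cell `a` and following the left/right pointers of `x` as prescribed by the
list `p` of moves (`false` = left pointer, `true` = right pointer); returns `none` if a
null pointer is encountered. -/
def followPath {n m : ℕ} {β : Type} (x : Fin n × Fin m → PSym n m β)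
    (a : Fin n × Fin m) (p : List Bool) : Option (Fin n × Fin m) :=
  p.foldl (fun acc b => acc.bind fun c => if b then (x c).rp else (x c).lp) (some a)

/-- The conditions for `x` to be a 1-input of `f_{n,m}`, with marked column `b` and special
element `a`: (1) `b` is the unique all-1 column; (2) `a` is the unique cell of column `b`
with `x_a ≠ (1,⊥,⊥,⊥)`; (3) for every column `j ≠ b` the tree path from `a` to the leaf
labeled `j` exists, and ends at a cell `ℓ_j` of column `j` holding a 0; (4) the back pointer
of each `ℓ_j` points to the column `b`. -/
def fCond (n m : ℕ) (x : Fin n × Fin m → PSym n m (Fin m))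
    (b : Fin m) (a : Fin n × Fin m) : Prop :=
  (∀ j : Fin m, (∀ i : Fin n, (x (i, j)).val = true) ↔ j = b) ∧
  a.2 = b ∧
  (∀ i : Fin n, x (i, b) ≠ PSym.one n m (Fin m) ↔ (i, b) = a) ∧
  ∀ j : Fin m, j ≠ b →
    ∃ ℓ : Fin n × Fin m, followPath x a (treePath m j.1) = some ℓ ∧
      ℓ.2 = j ∧ (x ℓ).val = false ∧ (x ℓ).bp = some b

/-- The pointer function `f_{n,m}`, with back pointers to the marked column. -/
noncomputable def fFun (n m : ℕ) (x : Fin n × Fin m → PSym n m (Fin m)) : Bool :=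
  if ∃ b a, fCond n m x b a then true else false

/-- The conditions for `x` to be a 1-input of `g_{n,m}`, with marked column `b` and special
element `a`: (1)–(3) as for `f_{n,m}`, and (4′) the set of columns `j ≠ b` whose highlighted
zero `ℓ_j` has back pointer to `a` has size exactly `m/2`. -/
def gCond (n m : ℕ) (x : Fin n × Fin m → PSym n m (Fin n × Fin m))
    (b : Fin m) (a : Fin n × Fin m) : Prop :=
  (∀ j : Fin m, (∀ i : Fin n, (x (i, j)).val = true) ↔ j = b) ∧
  a.2 = b ∧
  (∀ i : Fin n, x (i, b) ≠ PSym.one n m (Fin n × Fin m) ↔ (i, b) = a) ∧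
  (∀ j : Fin m, j ≠ b →
    ∃ ℓ : Fin n × Fin m, followPath x a (treePath m j.1) = some ℓ ∧
      ℓ.2 = j ∧ (x ℓ).val = false) ∧
  {j : Fin m | j ≠ b ∧ ∃ ℓ : Fin n × Fin m,
      followPath x a (treePath m j.1) = some ℓ ∧ (x ℓ).bp = some a}.ncard = m / 2

/-- The pointer function `g_{n,m}`, where exactly `m/2` of the highlighted zeroes point
back to the special element. -/
noncomputable def gFun (n m : ℕ) (x : Fin n × Fin m → PSym n m (Fin n × Fin m)) : Bool :=
  if ∃ b a, gCond n m x b a then true else false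

/-- Column `j` is good in `x` (for `g_{n,m}`): `x` is a 1-input with marked column `b ≠ j`
and special element `a`, and the highlighted zero of column `j` points back to `a`. -/
def goodColumn (n m : ℕ) (x : Fin n × Fin m → PSym n m (Fin n × Fin m)) (j : Fin m) : Prop :=
  ∃ b a, gCond n m x b a ∧ j ≠ b ∧
    ∃ ℓ : Fin n × Fin m, followPath x a (treePath m j.1) = some ℓ ∧ (x ℓ).bp = some a

/-- The conditions for `x` to be a 1-input of `h_{k,n,m}`, with marked columns `b 0,…,b (k-1)`
and special elements `a 0,…,a (k-1)`: (1) the `b s` are exactly the all-1 columns; (2) `a s` is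
the unique cell of column `b s` with `x_{a s} ≠ (1,⊥,⊥,⊥)`; (3) the internal pointers of the
`a s` form a cycle and all the `a s` have equal left pointers and equal right pointers;
(4) for every non-marked column `j` the tree path from any `a s` to the leaf labeled `j`
exists and ends at a cell `ℓ_j` of column `j` holding a 0. -/
def hCond (k n m : ℕ) (x : Fin n × Fin m → PSym n m (Fin n × Fin m))
    (b : Fin k → Fin m) (a : Fin k → Fin n × Fin m) : Prop :=
  Function.Injective b ∧
  (∀ j : Fin m, (∀ i : Fin n, (x (i, j)).val = true) ↔ ∃ s, b s = j) ∧
  (∀ s, (a s).2 = b s) ∧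
  (∀ s, ∀ i : Fin n, x (i, b s) ≠ PSym.one n m (Fin n × Fin m) ↔ (i, b s) = a s) ∧
  (∀ s : Fin k, (x (a s)).bp = some (a ⟨(s.1 + 1) % k, Nat.mod_lt _ s.pos⟩)) ∧
  (∀ s t : Fin k, (x (a s)).lp = (x (a t)).lp ∧ (x (a s)).rp = (x (a t)).rp) ∧
  ∀ j : Fin m, (∀ s, b s ≠ j) → ∀ s : Fin k,
    ∃ ℓ : Fin n × Fin m, followPath x (a s) (treePath m j.1) = some ℓ ∧
      ℓ.2 = j ∧ (x ℓ).val = false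

/-- The pointer function `h_{k,n,m}` with `k` marked columns and no back pointers. -/
noncomputable def hFun (k n m : ℕ) (x : Fin n × Fin m → PSym n m (Fin n × Fin m)) : Bool :=
  if ∃ b a, hCond k n m x b a then true else false

/-- The hard input `x^ℓ`: cell `(i,j)` holds `(0,⊥,⊥,⊥)` if `i = ℓ j` and `(1,⊥,⊥,⊥)`
otherwise. -/
def xhard (n m : ℕ) (β : Type) (ℓ : Fin m → Fin n) : Fin n × Fin m → PSym n m β :=
  fun c => if c.1 = ℓ c.2 then PSym.zero n m β else PSym.one n m β

/-- The set of (distinct) cells queried among the first `t` queries of `T` on input `x`. -/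
def queriedUpTo {ι σ : Type} [DecidableEq ι] (T : DTree ι σ) (x : ι → σ) (t : ℕ) :
    Finset ι :=
  ((T.queryList x).take t).toFinset
/-! ### The progress measure for the hard distribution `x^ℓ` -/

/-- Column `j` is compromised (for the input `x^ℓ`), given the set `Q` of queried cells:
the zero cell `(ℓ j, j)` has been queried, or more than `n/2` cells of column `j` have been
queried. -/
def compromisedCol (n m : ℕ) (ℓ : Fin m → Fin n) (Q : Finset (Fin n × Fin m))
    (j : Fin m) : Prop :=
  (ℓ j, j) ∈ Q ∨ n < 2 * (Q.filter fun c => c.2 = j).card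

/-- The progress measure `I_t = A_t + (2/n)·B_t` of the decision tree `T` on the input `x^ℓ`
after `t` queries, where `A_t` is the number of compromised columns and `B_t` is the number
of queried cells lying outside compromised columns. -/
noncomputable def Imeasure (n m : ℕ)
    (T : DTree (Fin n × Fin m) (PSym n m (Fin n × Fin m))) (ℓ : Fin m → Fin n) (t : ℕ) : ℝ :=
  ({j : Fin m |
      compromisedCol n m ℓ (queriedUpTo T (xhard n m (Fin n × Fin m) ℓ) t) j}.ncard : ℝ) +
    (2 / n) * ({c : Fin n × Fin m | c ∈ queriedUpTo T (xhard n m (Fin n × Fin m) ℓ) t ∧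
      ¬ compromisedCol n m ℓ (queriedUpTo T (xhard n m (Fin n × Fin m) ℓ) t) c.2}.ncard : ℝ)
/-! ### The balanced binary tree, via root-to-node paths -/

/-- The node set of the balanced binary tree with `m` leaves: each node is identified with
the left/right path from the root to it, so the nodes are exactly the prefixes of the
root-to-leaf paths. -/
def treeNodes (m : ℕ) : Finset (List Bool) :=
  (Finset.range m).biUnion fun j => (treePath m j).inits.toFinset

/-- The leaves of the balanced binary tree with `m` leaves. -/
def leafNodes (m : ℕ) : Finset (List Bool) :=
  (Finset.range m).image fun j => treePath m j

/-- The internal nodes of the balanced binary tree with `m` leaves. -/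
def internalNodes (m : ℕ) : Finset (List Bool) :=
  treeNodes m \ leafNodes m

/-- The subtree rooted at a node `u`: all nodes of which `u` is a prefix. -/
def subtreeOf (m : ℕ) (u : List Bool) : Finset (List Bool) :=
  (treeNodes m).filter fun w => u <+: w

/-! ### The hard distribution for `h_{1,n,m}` -/

/-- A parameter quadruple `(v, π, ℓᴸ, ℓᴺ)` for the hard distribution: a bit `v`, a map `π`
from internal tree nodes to columns, and row maps `ℓᴸ, ℓᴺ` for leaves resp. internal nodes. -/
abbrev HardQ (n m : ℕ) : Type :=
  Bool × ({u : List Bool // u ∈ internalNodes m} → Fin m) × (Fin m → Fin n) × (Fin m → Fin n)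

/-- The valid parameter quadruples: `π` injective and `ℓᴸ j ≠ ℓᴺ j` for all `j`. -/
noncomputable def hardSet (n m : ℕ) : Finset (HardQ n m) :=
  Finset.univ.filter fun q => Function.Injective q.2.1 ∧ ∀ j, q.2.2.1 j ≠ q.2.2.2 j

/-- The column of the root of the tree (`none` if the tree has no internal node). -/
noncomputable def rootCol (n m : ℕ) (q : HardQ n m) : Option (Fin m) :=
  if h : ([] : List Bool) ∈ internalNodes m then some (q.2.1 ⟨[], h⟩) else none

/-- The cell where a child node `w` of an internal node is placed: internal nodes go to
cell `(ℓᴺ (π w), π w)`, the leaf labeled `j` goes to cell `(ℓᴸ j, j)`, and the removed leaf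
(the one labeled by the root's column) yields a null pointer. -/
noncomputable def childCell (n m : ℕ) (q : HardQ n m) (w : List Bool) :
    Option (Fin n × Fin m) :=
  if h : w ∈ internalNodes m then some (q.2.2.2 (q.2.1 ⟨w, h⟩), q.2.1 ⟨w, h⟩)
  else if h2 : ∃ j : Fin m, w = treePath m j.1 ∧ some j ≠ rootCol n m q then
    some (q.2.2.1 (Classical.choose h2), Classical.choose h2)
  else none

/-- The input of the hard distribution determined by the parameter quadruple `q`:
the internal node `u` of the tree is placed at cell `(ℓᴺ (π u), π u)` with left and right
pointers to the cells of its children, value `v` and a self-loop internal pointer if `u` is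
the root, and value 0 otherwise; for `j ≠ π(root)`, the leaf labeled `j` is placed at cell
`(ℓᴸ j, j)` with value 0 and null pointers; all the remaining cells hold `(1,⊥,⊥,⊥)`. -/
noncomputable def hardInput (n m : ℕ) (q : HardQ n m) :
    Fin n × Fin m → PSym n m (Fin n × Fin m) :=
  fun c =>
    if h : ∃ u : {u : List Bool // u ∈ internalNodes m}, q.2.1 u = c.2 ∧ q.2.2.2 c.2 = c.1 then
      { val := if (Classical.choose h).1 = [] then q.1 else false
        lp := childCell n m q ((Classical.choose h).1 ++ [false])
        rp := childCell n m q ((Classical.choose h).1 ++ [true])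
        bp := if (Classical.choose h).1 = [] then some c else none }
    else if some c.2 ≠ rootCol n m q ∧ c.1 = q.2.2.1 c.2 then PSym.zero n m (Fin n × Fin m)
    else PSym.one n m (Fin n × Fin m)

/-- Column `j` directly satisfies (i) or (ii): one of the cells `(ℓᴸ j, j)`, `(ℓᴺ j, j)` has
been queried, or more than half of the cells of column `j` have been queried. -/
def colBad (n m : ℕ) (q : HardQ n m) (Q : Finset (Fin n × Fin m)) (j : Fin m) : Prop :=
  (q.2.2.1 j, j) ∈ Q ∨ (q.2.2.2 j, j) ∈ Q ∨ n < 2 * (Q.filter fun c => c.2 = j).card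

/-- Column `j` is compromised: it satisfies (i) or (ii), or some ancestor `u` of `π⁻¹(j)`
in the tree is such that column `π u` satisfies (i) or (ii). -/
def compromisedCol19 (n m : ℕ) (q : HardQ n m) (Q : Finset (Fin n × Fin m))
    (j : Fin m) : Prop :=
  colBad n m q Q j ∨
  ∃ w u : {u : List Bool // u ∈ internalNodes m}, q.2.1 w = j ∧
    u.1 <+: w.1 ∧ u.1 ≠ w.1 ∧ colBad n m q Q (q.2.1 u)

/-- The progress measure `I_t = min{A_t + (4·C0·log₂ m / n)·B_t, m/2}` of the decision tree
`D` on the hard-distribution input given by `q` after `t` queries, where `A_t` is the number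
of compromised columns and `B_t` the number of queried cells outside compromised columns. -/
noncomputable def Imeasure19 (n m : ℕ) (C0 : ℝ)
    (D : DTree (Fin n × Fin m) (PSym n m (Fin n × Fin m))) (q : HardQ n m) (t : ℕ) : ℝ :=
  min
    (({j : Fin m | compromisedCol19 n m q (queriedUpTo D (hardInput n m q) t) j}.ncard : ℝ) +
      (4 * C0 * Real.logb 2 m / n) *
        ({c : Fin n × Fin m | c ∈ queriedUpTo D (hardInput n m q) t ∧
          ¬ compromisedCol19 n m q (queriedUpTo D (hardInput n m q) t) c.2}.ncard : ℝ))
    (m / 2)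

/-!
Let `T` be a deterministic tree computing `g_{n,m}`, run on the 0-inputs `x^ℓ` (a single zero
per column, at row `ℓ j`, all other cells `(1,⊥,⊥,⊥)`) with `ℓ` uniform. Call a column
compromised when its zero, or more than half of its cells, has been queried. When `T` stops, at
least `m/2` columns are compromised: otherwise the unqueried cells of the other columns leave room
to write the pointer tree into `x^ℓ`, with exactly `m/2` highlighted zeroes pointing back, which
gives a 1-input agreeing with every query. On the other hand, finding the zero of a column is a
search for a needle among `n` positions, so the expected number of compromised columns is at most
`4/n` times the expected number of queries. Hence the expected cost is at least `nm/8`, and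
averaging over a randomized tree gives the same bound for `R0`.
-/

namespace DTree

variable {ι σ : Type}

noncomputable def queriesIn (T : DTree ι σ) (x : ι → σ) (A : Set ι) : ℕ :=
  (T.queryList x).countP (· ∈ A)

@[simp]
theorem queriesIn_leaf (b : Bool) (x : ι → σ) (A : Set ι) : (leaf b).queriesIn x A = 0 := rfl

theorem queriesIn_node_of_mem {v : ι} {A : Set ι} (hv : v ∈ A) (child : σ → DTree ι σ)
    (x : ι → σ) : (node v child).queriesIn x A = (child (x v)).queriesIn x A + 1 := by
  simp [queriesIn, queryList, hv]

theorem queriesIn_node_of_notMem {v : ι} {A : Set ι} (hv : v ∉ A) (child : σ → DTree ι σ)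
    (x : ι → σ) : (node v child).queriesIn x A = (child (x v)).queriesIn x A := by
  simp [queriesIn, queryList, hv]

theorem eval_eq_of_agree (T : DTree ι σ) {x y : ι → σ}
    (h : ∀ v ∈ T.queryList x, y v = x v) : T.eval y = T.eval x := by
  induction T with
  | leaf b => rfl
  | node v child ih =>
    have hv : y v = x v := h v List.mem_cons_self
    simp only [eval, queryList, hv] at h ⊢
    exact ih (x v) fun w hw => h w (List.mem_cons_of_mem v hw)

theorem sum_queriesIn_fiber {γ : Type} [Fintype γ] (T : DTree ι σ) (x : ι → σ)
    (κ : ι → γ) : ∑ g, T.queriesIn x {v | κ v = g} = T.cost x := by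
  simp only [queriesIn, cost, Set.mem_ofPred_eq]
  induction T.queryList x with
  | nil => simp
  | cons v l ih => simp [List.countP_cons, Finset.sum_add_distrib, ih, add_comm]

theorem card_filter_toFinset_le_queriesIn [DecidableEq ι] (T : DTree ι σ)
    (x : ι → σ) (P : ι → Prop) [DecidablePred P] :
    ((T.queryList x).toFinset.filter P).card ≤ T.queriesIn x {v | P v} := by
  have : (T.queryList x).toFinset.filter P = ((T.queryList x).filter (P ·)).toFinset := by
    ext; simp
  rw [this, queriesIn, List.countP_eq_length_filter]
  convert List.toFinset_card_le _
  exact Iff.rfl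

section Needle

variable [DecidableEq ι] {R : Type} [Fintype R] (z : ι → σ) (p : R → ι) (s : σ)

/-- `k` counts the probes into `Set.range p` made before `T` is run. -/
def NeedleFound (T : DTree ι σ) (k : ℕ) (r : R) : Prop :=
  p r ∈ T.queryList (Function.update z (p r) s) ∨
    Fintype.card R < 2 * (k + T.queriesIn (Function.update z (p r) s) (Set.range p))

variable {z p s}

theorem needleFound_node_of_ne (hp : p.Injective) (child : σ → DTree ι σ) (k : ℕ) {i r : R}
    (hri : r ≠ i) :
    NeedleFound z p s (node (p i) child) k r ↔ NeedleFound z p s (child (z (p i))) (k + 1) r := by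
  have hupd : Function.update z (p r) s (p i) = z (p i) :=
    Function.update_of_ne (hp.ne hri.symm) _ _
  simp only [NeedleFound, queryList, queriesIn_node_of_mem (Set.mem_range_self i), hupd,
    List.mem_cons, hp.ne hri, false_or]
  exact or_congr_right (by omega)

/-- The potential `min (card R) (2k)` pays for hitting the needle: while `2k ≤ card R`, more than
half of the positions are still in `S`, and each of them pays `2` toward the hit from its own
probe. -/
theorem card_mul_card_needleFound_probe_le (hp : p.Injective) (child : σ → DTree ι σ) (i : R)
    (S : Finset R) (k : ℕ) (hS : Fintype.card R ≤ S.card + k)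
    (hchild : Fintype.card R *
        ((S.erase i).filter (NeedleFound z p s (child (z (p i))) (k + 1))).card ≤
      (S.erase i).card * min (Fintype.card R) (2 * (k + 1)) +
        4 * ∑ r ∈ S.erase i,
          (child (z (p i))).queriesIn (Function.update z (p r) s) (Set.range p)) :
    Fintype.card R * (S.filter (NeedleFound z p s (node (p i) child) k)).card ≤
      S.card * min (Fintype.card R) (2 * k) +
        4 * ∑ r ∈ S,
          (node (p i) child).queriesIn (Function.update z (p r) s) (Set.range p) := by
  have hfilter : (S.erase i).filter (NeedleFound z p s (node (p i) child) k) =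
      (S.erase i).filter (NeedleFound z p s (child (z (p i))) (k + 1)) :=
    Finset.filter_congr fun r hr => needleFound_node_of_ne hp child k (Finset.ne_of_mem_erase hr)
  simp only [queriesIn_node_of_mem (Set.mem_range_self i)]
  have hsum : ∑ r ∈ S.erase i,
        ((child (Function.update z (p r) s (p i))).queriesIn (Function.update z (p r) s)
          (Set.range p) + 1) =
      ∑ r ∈ S.erase i, (child (z (p i))).queriesIn (Function.update z (p r) s) (Set.range p) +
        (S.erase i).card := by
    rw [Finset.card_eq_sum_ones, ← Finset.sum_add_distrib]
    refine Finset.sum_congr rfl fun r hr => ?_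
    rw [Function.update_of_ne (hp.ne (Finset.ne_of_mem_erase hr).symm)]
  have hmin : (S.erase i).card * min (Fintype.card R) (2 * (k + 1)) ≤
      (S.erase i).card * min (Fintype.card R) (2 * k) + 2 * (S.erase i).card :=
    calc _ ≤ (S.erase i).card * (min (Fintype.card R) (2 * k) + 2) :=
          Nat.mul_le_mul_left _ (by omega)
      _ = _ := by ring
  by_cases hi : i ∈ S
  · have hfound : NeedleFound z p s (node (p i) child) k i := Or.inl (by simp [queryList])
    have hS' := Finset.pred_card_le_card_erase (a := i) (s := S)
    rw [← Finset.insert_erase hi, Finset.filter_insert, if_pos hfound,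
      Finset.card_insert_of_notMem (fun h => (Finset.mem_filter.mp h).1 |>
        Finset.notMem_erase i S), Finset.sum_insert (Finset.notMem_erase i S), hsum, hfilter,
      Finset.card_insert_of_notMem (Finset.notMem_erase i S), Nat.succ_mul, Nat.mul_succ]
    omega
  · rw [Finset.erase_eq_of_notMem hi] at hfilter hsum hchild hmin
    rw [hfilter, hsum]
    omega

theorem card_mul_card_needleFound_le (hp : p.Injective) (T : DTree ι σ) (S : Finset R) (k : ℕ)
    (hS : Fintype.card R ≤ S.card + k) :
    Fintype.card R * (S.filter (NeedleFound z p s T k)).card ≤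
      S.card * min (Fintype.card R) (2 * k) +
        4 * ∑ r ∈ S, T.queriesIn (Function.update z (p r) s) (Set.range p) := by
  induction T generalizing S k with
  | leaf b =>
    have hleaf : ∀ r, NeedleFound z p s (leaf b) k r ↔ Fintype.card R < 2 * k := fun r => by
      simp [NeedleFound, queryList]
    by_cases hk : Fintype.card R < 2 * k
    · rw [Finset.filter_true_of_mem fun r _ => (hleaf r).2 hk, min_eq_left hk.le, mul_comm]
      exact Nat.le_add_right _ _
    · rw [Finset.filter_false_of_mem fun r _ => mt (hleaf r).1 hk]
      simp
  | node v child ih =>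
    by_cases hv : v ∈ Set.range p
    · obtain ⟨i, rfl⟩ := hv
      refine card_mul_card_needleFound_probe_le hp child i S k hS (ih _ _ _ ?_)
      have := Finset.pred_card_le_card_erase (a := i) (s := S)
      omega
    · have hz : ∀ r, Function.update z (p r) s v = z v := fun r =>
        Function.update_of_ne (fun h => hv ⟨r, h.symm⟩) _ _
      have hfound : ∀ r, NeedleFound z p s (node v child) k r ↔
          NeedleFound z p s (child (z v)) k r := fun r => by
        have hr : p r ≠ v := fun h => hv ⟨r, h⟩
        simp only [NeedleFound, queryList, queriesIn_node_of_notMem hv, hz, List.mem_cons, hr,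
          false_or]
      rw [Finset.filter_congr fun r _ => hfound r]
      simpa only [queriesIn_node_of_notMem hv, hz] using ih (z v) S k hS

end Needle

end DTree

theorem le_R0query_of_forall_computes {ι σ α : Type} [Fintype α] [Nonempty α]
    {f : (ι → σ) → Bool} (X : α → ι → σ) (B : ℝ≥0∞)
    (h : ∀ T : DTree ι σ, T.Computes f →
      Fintype.card α * B ≤ ∑ a, (T.cost (X a) : ℝ≥0∞)) :
    B ≤ R0query f := by
  refine le_iInf₂ fun μ hμ => ?_
  have hcard : (Fintype.card α : ℝ≥0∞) ≠ 0 := by simp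
  rw [← ENNReal.mul_le_mul_iff_right hcard (ENNReal.natCast_ne_top _)]
  calc Fintype.card α * B = ∑' T, μ T * (Fintype.card α * B) := by
        rw [ENNReal.tsum_mul_right, PMF.tsum_coe, one_mul]
    _ ≤ ∑' T, μ T * ∑ a, (T.cost (X a) : ℝ≥0∞) := by
        refine ENNReal.tsum_le_tsum fun T => ?_
        by_cases hT : μ T = 0
        · simp [hT]
        · exact mul_le_mul_right (h T (hμ T ((PMF.mem_support_iff μ T).mpr hT))) _
    _ = ∑ a, expCost μ (X a) := by
        simp only [Finset.mul_sum, expCost]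
        exact Summable.tsum_finsetSum fun _ _ => ENNReal.summable
    _ ≤ ∑ _a : α, ⨆ x, expCost μ x := Finset.sum_le_sum fun a _ => le_iSup _ (X a)
    _ = Fintype.card α * ⨆ x, expCost μ x := by simp

theorem sum_sum_update {α β M : Type} [Fintype α] [DecidableEq α] [Fintype β] [AddCommMonoid M]
    (F : (α → β) → M) (j : α) :
    ∑ ℓ, ∑ r, F (Function.update ℓ j r) = Fintype.card β • ∑ ℓ, F ℓ := by
  have hinv : Function.Involutive fun x : (α → β) × β => (Function.update x.1 j x.2, x.1 j) :=
    fun x => by simp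
  calc ∑ ℓ, ∑ r, F (Function.update ℓ j r)
        = ∑ x : (α → β) × β, F (hinv.toPerm _ x).1 :=
        (Fintype.sum_prod_type' fun ℓ r => F (Function.update ℓ j r)).symm
    _ = ∑ x : (α → β) × β, F x.1 := Equiv.sum_comp _ fun x : (α → β) × β => F x.1
    _ = _ := by simp [Fintype.sum_prod_type, Finset.smul_sum]

theorem bitsPath_length (k j : ℕ) : (bitsPath k j).length = k := by
  simp [bitsPath]

theorem bitsPath_injOn {k j j' : ℕ} (hj : j < 2 ^ k) (hj' : j' < 2 ^ k)
    (h : bitsPath k j = bitsPath k j') : j = j' := by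
  rw [bitsPath, bitsPath, List.map_inj_left] at h
  refine Nat.eq_of_testBit_eq fun i => ?_
  by_cases hi : i < k
  · exact h i (by simp [hi])
  · have hk : 2 ^ k ≤ 2 ^ i := Nat.pow_le_pow_right (by norm_num) (not_lt.mp hi)
    rw [Nat.testBit_lt_two_pow (hj.trans_le hk), Nat.testBit_lt_two_pow (hj'.trans_le hk)]

theorem treePath_length_le (m j : ℕ) : (treePath m j).length ≤ Nat.log 2 m + 1 := by
  rw [treePath]
  split_ifs <;> simp [bitsPath_length]

theorem treePath_ne_nil {m : ℕ} (hm : 2 ≤ m) (j : ℕ) : treePath m j ≠ [] := by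
  have hk : 1 ≤ Nat.log 2 m := Nat.log_pos (by norm_num) hm
  rw [treePath]
  split_ifs <;> simp [← List.length_eq_zero_iff, bitsPath_length] <;> omega

theorem treePath_prefix_free {m j j' : ℕ} (hm : 2 ≤ m) (hj : j < m) (hj' : j' < m)
    (h : treePath m j <+: treePath m j') : j = j' := by
  have h2k : 2 ^ Nat.log 2 m ≤ m := Nat.pow_log_le_self 2 (by omega)
  have h2k' : m < 2 ^ (Nat.log 2 m + 1) := Nat.lt_pow_succ_log_self (by norm_num) m
  rw [treePath, treePath] at h
  generalize Nat.log 2 m = k at h h2k h2k'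
  have hrk : m - 2 ^ k < 2 ^ k := by rw [pow_succ] at h2k'; omega
  have hlen : ∀ {i i'}, bitsPath k i <+: bitsPath k i' → bitsPath k i = bitsPath k i' :=
    fun h => h.eq_of_length (by rw [bitsPath_length, bitsPath_length])
  by_cases h0 : m - 2 ^ k = 0
  · simp only [if_pos h0] at h
    exact bitsPath_injOn (by omega) (by omega) (hlen h)
  simp only [if_neg h0] at h
  by_cases hA : j < 2 * (m - 2 ^ k) <;> by_cases hB : j' < 2 * (m - 2 ^ k) <;>
    simp only [hA, hB, ↓reduceIte] at h
  · obtain ⟨hd, hmod⟩ := List.append_inj' (h.eq_of_length (by simp [bitsPath_length])) rfl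
    have := bitsPath_injOn (by omega) (by omega) hd
    simp only [List.cons.injEq, and_true, beq_eq_beq] at hmod
    omega
  · simpa [bitsPath_length] using h.length_le
  · rcases List.prefix_concat_iff.mp h with h | h
    · simpa [bitsPath_length] using congrArg List.length h
    · have := bitsPath_injOn (by omega) (by omega) (hlen h)
      omega
  · have := bitsPath_injOn (by omega) (by omega) (hlen h)
    omega

theorem mem_treeNodes {m : ℕ} {p : List Bool} :
    p ∈ treeNodes m ↔ ∃ j < m, p <+: treePath m j := by
  simp [treeNodes, List.mem_inits]

theorem mem_internalNodes_of_append_cons {m : ℕ} (hm : 2 ≤ m) {p q : List Bool} {d : Bool}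
    {j : ℕ} (hj : j < m) (h : p ++ d :: q = treePath m j) : p ∈ internalNodes m := by
  refine Finset.mem_sdiff.mpr ⟨mem_treeNodes.mpr ⟨j, hj, h ▸ List.prefix_append _ _⟩, ?_⟩
  simp only [leafNodes, Finset.mem_image, Finset.mem_range, not_exists, not_and]
  intro j' hj' hp
  have hpre : treePath m j' <+: treePath m j := by rw [hp, ← h]; exact List.prefix_append _ _
  obtain rfl := treePath_prefix_free hm hj' hj hpre
  simpa using congrArg List.length (h.trans hp)

theorem length_le_of_mem_internalNodes {m : ℕ} {p : List Bool} (hp : p ∈ internalNodes m) :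
    p.length ≤ Nat.log 2 m := by
  obtain ⟨hp, hleaf⟩ := Finset.mem_sdiff.mp hp
  obtain ⟨j, hj, hpre⟩ := mem_treeNodes.mp hp
  have hne : p ≠ treePath m j := fun h =>
    hleaf (Finset.mem_image.mpr ⟨j, by simpa using hj, h.symm⟩)
  have := treePath_length_le m j
  have := hpre.length_le
  have : p.length ≠ (treePath m j).length := fun h => hne (hpre.eq_of_length h)
  omega

/-- The leading `1` keeps apart strings that differ only by leading `false`s. -/
def pathCode (p : List Bool) : ℕ := p.foldl (fun c d => 2 * c + d.toNat) 1

theorem pathCode_append_singleton (p : List Bool) (d : Bool) :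
    pathCode (p ++ [d]) = 2 * pathCode p + d.toNat := by
  simp [pathCode, List.foldl_append]

theorem pathCode_pos (p : List Bool) : 0 < pathCode p := by
  induction p using List.reverseRecOn with
  | nil => simp [pathCode]
  | append_singleton p d ih => rw [pathCode_append_singleton]; omega

theorem pathCode_lt (p : List Bool) : pathCode p < 2 ^ (p.length + 1) := by
  induction p using List.reverseRecOn with
  | nil => simp [pathCode]
  | append_singleton p d ih =>
    rw [pathCode_append_singleton, List.length_append, List.length_singleton, pow_succ]
    have := Bool.toNat_le d
    omega

theorem pathCode_injective : Function.Injective pathCode := by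
  intro p
  induction p using List.reverseRecOn with
  | nil =>
    intro q hq
    rcases List.eq_nil_or_concat' q with rfl | ⟨q, d, rfl⟩
    · rfl
    · rw [pathCode_append_singleton, show pathCode [] = 1 from rfl] at hq
      have := pathCode_pos q
      omega
  | append_singleton p d ih =>
    intro q hq
    rcases List.eq_nil_or_concat' q with rfl | ⟨q, d', rfl⟩
    · rw [pathCode_append_singleton, show pathCode [] = 1 from rfl] at hq
      have := pathCode_pos p
      omega
    · rw [pathCode_append_singleton, pathCode_append_singleton] at hq
      have := Bool.toNat_le d
      have := Bool.toNat_le d'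
      have hd : d.toNat = d'.toNat := by omega
      rw [ih (by omega : pathCode p = pathCode q)]
      cases d <;> cases d' <;> simp_all

theorem card_internalNodes_le {m : ℕ} (hm : 1 ≤ m) : (internalNodes m).card ≤ 2 * m := by
  have hcode : ∀ p ∈ internalNodes m, pathCode p ∈ Finset.range (2 * 2 ^ Nat.log 2 m) :=
    fun p hp => Finset.mem_range.mpr <| (pathCode_lt p).trans_le <| by
      rw [← pow_succ']
      exact Nat.pow_le_pow_right (by norm_num) (by have := length_le_of_mem_internalNodes hp; omega)
  calc (internalNodes m).card ≤ (Finset.range (2 * 2 ^ Nat.log 2 m)).card :=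
        Finset.card_le_card_of_injOn pathCode hcode pathCode_injective.injOn
    _ ≤ 2 * m := by
        rw [Finset.card_range]
        exact Nat.mul_le_mul_left 2 (Nat.pow_log_le_self 2 (by omega))

theorem followPath_cons_of_eq_some {n m : ℕ} {β : Type} (x : Fin n × Fin m → PSym n m β)
    {c c' : Fin n × Fin m} {d : Bool} (q : List Bool)
    (h : (if d then (x c).rp else (x c).lp) = some c') :
    followPath x c (d :: q) = followPath x c' q := by
  simp [followPath, h]

section Extension

variable {n m : ℕ} (ℓ : Fin m → Fin n) (a : Fin n × Fin m) (G : Finset (Fin m))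
  (θ : {p // p ∈ internalNodes m} → Fin n × Fin m)

/-- The cell of the node `p` of the balanced tree: the root at `a`, the other internal nodes
at `θ`, and the leaf of column `j` at the zero `(ℓ j, j)` of `x^ℓ`. -/
noncomputable def nodeCell (p : List Bool) : Option (Fin n × Fin m) :=
  if p = [] then some a
  else if h : p ∈ internalNodes m then some (θ ⟨p, h⟩)
  else if h : ∃ j : Fin m, p = treePath m j then some (ℓ h.choose, h.choose)
  else none

/-- The 1-input of `g_{n,m}` with special element `a` and good columns `G`, obtained from `x^ℓ`
by writing the balanced tree into the cells `a` and `θ u`. -/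
noncomputable def extendedInput (c : Fin n × Fin m) : PSym n m (Fin n × Fin m) :=
  if c = a then ⟨true, nodeCell ℓ a θ [false], nodeCell ℓ a θ [true], some a⟩
  else if h : ∃ u, θ u = c then
    ⟨true, nodeCell ℓ a θ (h.choose.1 ++ [false]), nodeCell ℓ a θ (h.choose.1 ++ [true]),
      none⟩
  else if c.1 = ℓ c.2 ∧ c.2 ≠ a.2 then
    ⟨false, none, none, if c.2 ∈ G then some a else none⟩
  else PSym.one n m _

variable {ℓ a G θ}

theorem nodeCell_nil : nodeCell ℓ a θ [] = some a := if_pos rfl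

theorem nodeCell_of_mem {p : List Bool} (hp : p ∈ internalNodes m) (hne : p ≠ []) :
    nodeCell ℓ a θ p = some (θ ⟨p, hp⟩) := by
  rw [nodeCell, if_neg hne, dif_pos hp]

theorem nodeCell_treePath (hm : 2 ≤ m) (j : Fin m) :
    nodeCell ℓ a θ (treePath m j) = some (ℓ j, j) := by
  have hleaf : treePath m j ∉ internalNodes m := fun h =>
    (Finset.mem_sdiff.mp h).2 (Finset.mem_image.mpr ⟨j, by simp, rfl⟩)
  have hj : ∃ j' : Fin m, treePath m j = treePath m j' := ⟨j, rfl⟩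
  have hchoose : hj.choose = j :=
    (Fin.ext (treePath_prefix_free hm j.2 hj.choose.2 (hj.choose_spec ▸ List.prefix_refl _))).symm
  rw [nodeCell, if_neg (treePath_ne_nil hm _), dif_neg hleaf, dif_pos hj, hchoose]

theorem extendedInput_self :
    extendedInput ℓ a G θ a =
      ⟨true, nodeCell ℓ a θ [false], nodeCell ℓ a θ [true], some a⟩ :=
  if_pos rfl

theorem extendedInput_apply_theta (hθ : θ.Injective) (hθa : ∀ u, (θ u).2 ≠ a.2)
    (u : {p // p ∈ internalNodes m}) :
    extendedInput ℓ a G θ (θ u) =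
      ⟨true, nodeCell ℓ a θ (u.1 ++ [false]), nodeCell ℓ a θ (u.1 ++ [true]), none⟩ := by
  have h : ∃ u', θ u' = θ u := ⟨u, rfl⟩
  rw [extendedInput, if_neg fun h => hθa u (by rw [h]), dif_pos h, hθ h.choose_spec]

theorem extendedInput_zero (hθ : ∀ u, (θ u).1 ≠ ℓ (θ u).2) {j : Fin m} (hj : j ≠ a.2) :
    extendedInput ℓ a G θ (ℓ j, j) =
      ⟨false, none, none, if j ∈ G then some a else none⟩ := by
  rw [extendedInput, if_neg fun h => hj (by rw [← h]),
    dif_neg fun ⟨u, hu⟩ => hθ u (by rw [hu]), if_pos ⟨rfl, hj⟩]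

theorem extendedInput_marked (hθ : ∀ u, (θ u).2 ≠ a.2) {i : Fin n} (hi : (i, a.2) ≠ a) :
    extendedInput ℓ a G θ (i, a.2) = PSym.one n m _ := by
  rw [extendedInput, if_neg hi, dif_neg fun ⟨u, hu⟩ => hθ u (by rw [hu]),
    if_neg fun h => h.2 rfl]

theorem extendedInput_eq_xhard {c : Fin n × Fin m} (hca : c ≠ a) (hcθ : ∀ u, θ u ≠ c)
    (hc : c.1 = ℓ c.2 → c.2 ≠ a.2 ∧ c.2 ∉ G) :
    extendedInput ℓ a G θ c = xhard n m _ ℓ c := by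
  rw [extendedInput, if_neg hca, dif_neg fun ⟨u, hu⟩ => hcθ u hu, xhard]
  by_cases hzero : c.1 = ℓ c.2
  · rw [if_pos ⟨hzero, (hc hzero).1⟩, if_neg (hc hzero).2, if_pos hzero, PSym.zero]
  · rw [if_neg fun h => hzero h.1, if_neg hzero]

theorem extendedInput_pointers (hθ : θ.Injective) (hθa : ∀ u, (θ u).2 ≠ a.2) {p : List Bool}
    (hp : p ∈ internalNodes m) {c : Fin n × Fin m} (hc : nodeCell ℓ a θ p = some c)
    (d : Bool) :
    (if d then (extendedInput ℓ a G θ c).rp else (extendedInput ℓ a G θ c).lp) =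
      nodeCell ℓ a θ (p ++ [d]) := by
  rcases eq_or_ne p [] with rfl | hne
  · rw [nodeCell_nil, Option.some_inj] at hc
    subst hc
    cases d <;> simp [extendedInput_self]
  · rw [nodeCell_of_mem hp hne, Option.some_inj] at hc
    subst hc
    cases d <;> simp [extendedInput_apply_theta hθ hθa]

theorem followPath_extendedInput (hm : 2 ≤ m) (hθ : θ.Injective)
    (hθa : ∀ u, (θ u).2 ≠ a.2) (j : Fin m) :
    followPath (extendedInput ℓ a G θ) a (treePath m j) = some (ℓ j, j) := by
  suffices h : ∀ q p c, p ++ q = treePath m j → nodeCell ℓ a θ p = some c →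
      followPath (extendedInput ℓ a G θ) c q = some (ℓ j, j) from
    h _ [] a rfl nodeCell_nil
  intro q
  induction q with
  | nil =>
    intro p c hp hc
    rw [List.append_nil] at hp
    rw [hp, nodeCell_treePath hm, Option.some_inj] at hc
    rw [← hc]
    rfl
  | cons d q ih =>
    intro p c hp hc
    have hpd : ∃ c', nodeCell ℓ a θ (p ++ [d]) = some c' := by
      rcases q with _ | ⟨e, q⟩
      · exact ⟨_, by rw [hp, nodeCell_treePath hm]⟩
      · exact ⟨_, nodeCell_of_mem (mem_internalNodes_of_append_cons hm j.2 (by simpa using hp))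
          (by simp)⟩
    obtain ⟨c', hc'⟩ := hpd
    rw [followPath_cons_of_eq_some _ q ((extendedInput_pointers hθ hθa
      (mem_internalNodes_of_append_cons hm j.2 hp) hc d).trans hc')]
    exact ih (p ++ [d]) c' (by simpa using hp) hc'

theorem gCond_extendedInput (hm : 2 ≤ m) (hθ : θ.Injective) (hθa : ∀ u, (θ u).2 ≠ a.2)
    (hθzero : ∀ u, (θ u).1 ≠ ℓ (θ u).2) (hGa : a.2 ∉ G) (hG : G.card = m / 2) :
    gCond n m (extendedInput ℓ a G θ) a.2 a := by
  have hpath := followPath_extendedInput (ℓ := ℓ) (G := G) hm hθ hθa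
  refine ⟨fun j => ⟨fun hall => ?_, ?_⟩, rfl, fun i => ⟨fun hi => ?_, ?_⟩,
    fun j hj => ⟨_, hpath j, rfl, by rw [extendedInput_zero hθzero hj]⟩, ?_⟩
  · by_contra hj
    simpa [extendedInput_zero hθzero hj] using hall (ℓ j)
  · rintro rfl i
    by_cases hi : (i, a.2) = a
    · rw [hi, extendedInput_self]
    · rw [extendedInput_marked hθa hi, PSym.one]
  · by_contra hne
    exact hi (extendedInput_marked hθa hne)
  · intro hi
    rw [hi, extendedInput_self, Ne, PSym.one, PSym.mk.injEq]
    simp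
  · have hgood : {j : Fin m | j ≠ a.2 ∧ ∃ c, followPath (extendedInput ℓ a G θ) a
        (treePath m j) = some c ∧ (extendedInput ℓ a G θ c).bp = some a} = G := by
      ext j
      simp only [Set.mem_ofPred_eq, Finset.mem_coe, hpath, Option.some_inj, exists_eq_left']
      constructor
      · rintro ⟨hj, hbp⟩
        by_contra hjG
        simp [extendedInput_zero hθzero hj, hjG] at hbp
      · intro hjG
        have hj : j ≠ a.2 := fun h => hGa (h ▸ hjG)
        exact ⟨hj, by simp [extendedInput_zero hθzero hj, hjG]⟩
    rw [hgood, Set.ncard_coe_finset, hG]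

end Extension

section Adversary

variable {n m : ℕ} {ℓ : Fin m → Fin n} {Q : Finset (Fin n × Fin m)}

theorem le_two_mul_card_freeRows {j : Fin m} (hj : ¬compromisedCol n m ℓ Q j) :
    n ≤ 2 * (Finset.univ.filter fun i => i ≠ ℓ j ∧ (i, j) ∉ Q).card + 2 := by
  simp only [compromisedCol, not_or, not_lt] at hj
  have hused : (Finset.univ.filter fun i => ¬(i ≠ ℓ j ∧ (i, j) ∉ Q)) ⊆
      insert (ℓ j) ((Q.filter fun c => c.2 = j).image Prod.fst) := by
    intro i
    simp only [Finset.mem_filter, Finset.mem_univ, true_and, not_and_or, not_not,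
      Finset.mem_insert, Finset.mem_image]
    rintro (rfl | hi)
    · exact Or.inl rfl
    · exact Or.inr ⟨(i, j), ⟨hi, rfl⟩, rfl⟩
  have h1 := Finset.card_le_card hused
  have h2 := Finset.card_insert_le (ℓ j) ((Q.filter fun c => c.2 = j).image Prod.fst)
  have h3 := Finset.card_image_le (s := Q.filter fun c => c.2 = j) (f := Prod.fst)
  have h4 := Finset.card_filter_add_card_filter_not
    (s := (Finset.univ : Finset (Fin n))) (p := fun i => i ≠ ℓ j ∧ (i, j) ∉ Q)
  simp only [Finset.card_univ, Fintype.card_fin] at h4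
  omega

theorem le_two_mul_card_freeCells {U : Finset (Fin m)}
    (hU : ∀ j ∈ U, ¬compromisedCol n m ℓ Q j) :
    n * U.card ≤ 2 * ((Finset.univ ×ˢ U).filter fun c => c.1 ≠ ℓ c.2 ∧ c ∉ Q).card +
      2 * U.card := by
  rw [Finset.card_filter, Finset.sum_product_right, Finset.mul_sum, mul_comm,
    Finset.card_eq_sum_ones, Finset.sum_mul, Finset.mul_sum, ← Finset.sum_add_distrib]
  refine Finset.sum_le_sum fun j hj => ?_
  have := le_two_mul_card_freeRows (hU j hj)
  rw [Finset.card_filter] at this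
  dsimp only
  omega

theorem exists_gFun_eq_true_of_card_compromisedCol_lt (hn : 10 ≤ n) (hm : 2 ≤ m) (hme : Even m)
    (h : (Finset.univ.filter (compromisedCol n m ℓ Q)).card < m / 2) :
    ∃ y, (∀ c ∈ Q, y c = xhard n m _ ℓ c) ∧ gFun n m y = true := by
  set U := (Finset.univ.filter (compromisedCol n m ℓ Q))ᶜ
  have hU : ∀ j ∈ U, ¬compromisedCol n m ℓ Q j := fun j hj h =>
    Finset.mem_compl.mp hj (Finset.mem_filter.mpr ⟨Finset.mem_univ j, h⟩)
  have hUcard : m / 2 + 1 ≤ U.card := by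
    rw [Finset.card_compl, Fintype.card_fin]
    omega
  obtain ⟨b, hb⟩ : U.Nonempty := Finset.card_pos.mp (by omega)
  obtain ⟨i, hi⟩ : (Finset.univ.filter fun i => i ≠ ℓ b ∧ (i, b) ∉ Q).Nonempty :=
    Finset.card_pos.mp (by have := le_two_mul_card_freeRows (hU b hb); omega)
  set a : Fin n × Fin m := (i, b)
  have haQ : a ∉ Q := (Finset.mem_filter.mp hi).2.2
  have hU' : m / 2 ≤ (U.erase b).card := by rw [Finset.card_erase_of_mem hb]; omega
  obtain ⟨G, hGU, hG⟩ := Finset.exists_subset_card_eq hU'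
  have hfree := le_two_mul_card_freeCells (U := U.erase b)
    (fun j hj => hU j (Finset.mem_of_mem_erase hj))
  set F := (Finset.univ ×ˢ U.erase b).filter fun c => c.1 ≠ ℓ c.2 ∧ c ∉ Q
  -- `m / 2` clean columns with at least `n / 2 - 1 ≥ 4` free cells each: room for `2m` nodes.
  have hF : (internalNodes m).card ≤ F.card := by
    have hn' := Nat.mul_le_mul_right (U.erase b).card hn
    have hnodes := card_internalNodes_le (m := m) (by omega)
    obtain ⟨k, rfl⟩ := hme
    omega
  obtain ⟨e⟩ := Function.Embedding.nonempty_of_card_le (α := {p // p ∈ internalNodes m})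
    (β := {c // c ∈ F}) (by simpa only [Fintype.card_coe] using hF)
  set θ := fun u => (e u).1
  have hθF : ∀ u, θ u ∈ F := fun u => (e u).2
  simp only [F, Finset.mem_filter, Finset.mem_product, Finset.mem_univ, true_and,
    Finset.mem_erase] at hθF
  refine ⟨extendedInput ℓ a G θ, fun c hc => extendedInput_eq_xhard (fun h => haQ (h ▸ hc))
    (fun u h => (hθF u).2.2 (h ▸ hc)) fun hzero => ⟨?_, ?_⟩, ?_⟩
  · intro hcb
    exact (hU b hb) (Or.inl (by rw [show b = c.2 from hcb.symm, ← hzero]; exact hc))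
  · intro hcG
    exact (hU c.2 (Finset.mem_of_mem_erase (hGU hcG))) (Or.inl (by rw [← hzero]; exact hc))
  · rw [gFun, if_pos ⟨a.2, a, gCond_extendedInput hm (fun u v h => e.injective (Subtype.ext h))
      (fun u => (hθF u).1.1) (fun u => (hθF u).2.1) (fun h => (Finset.mem_erase.mp (hGU h)).1 rfl)
      hG⟩]

end Adversary

theorem gFun_xhard (n m : ℕ) (ℓ : Fin m → Fin n) : gFun n m (xhard n m _ ℓ) = false := by
  rw [gFun, if_neg]
  rintro ⟨b, a, hcol, -⟩
  simpa [xhard, PSym.zero] using (hcol b).mpr rfl (ℓ b)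

theorem xhard_update {n m : ℕ} {β : Type} (ℓ : Fin m → Fin n) (j : Fin m) (r : Fin n) :
    xhard n m β (Function.update ℓ j r) =
      Function.update (fun c => if c.2 = j then PSym.one n m β else xhard n m β ℓ c) (r, j)
        (PSym.zero n m β) := by
  funext ⟨i, j'⟩
  by_cases hj : j' = j
  · subst hj
    by_cases hi : i = r <;> simp [xhard, hi]
  · simp [xhard, hj]

section Counting

variable {n m : ℕ} (T : DTree (Fin n × Fin m) (PSym n m (Fin n × Fin m)))

theorem mul_card_compromisedCol_update_le (ℓ : Fin m → Fin n) (j : Fin m) :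
    n * (Finset.univ.filter fun r => compromisedCol n m (Function.update ℓ j r)
      (T.queryList (xhard n m _ (Function.update ℓ j r))).toFinset j).card ≤
    4 * ∑ r, T.queriesIn (xhard n m _ (Function.update ℓ j r)) {c | c.2 = j} := by
  set z := fun c : Fin n × Fin m => if c.2 = j then PSym.one n m _ else xhard n m _ ℓ c
  have hp : Function.Injective fun r : Fin n => (r, j) := fun r r' h => (Prod.mk.inj h).1
  have hrange : Set.range (fun r : Fin n => (r, j)) = {c | c.2 = j} := by
    ext ⟨i, j'⟩
    simp [eq_comm]
  have key := DTree.card_mul_card_needleFound_le (z := z) (s := PSym.zero n m _) hp T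
    Finset.univ 0 (by simp)
  have hz : ∀ r, Function.update z (r, j) (PSym.zero n m _) =
      xhard n m _ (Function.update ℓ j r) := fun r => (xhard_update ℓ j r).symm
  simp only [hz, hrange, Fintype.card_fin, mul_zero, min_zero, zero_add] at key
  refine le_trans (Nat.mul_le_mul_left n (Finset.card_le_card fun r => ?_)) key
  simp only [Finset.mem_filter, Finset.mem_univ, true_and, compromisedCol,
    Function.update_self, DTree.NeedleFound, hz, hrange, zero_add, Fintype.card_fin]
  rintro (hr | hr)
  · exact Or.inl (List.mem_toFinset.mp hr)
  · exact Or.inr (hr.trans_le (Nat.mul_le_mul_left 2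
      (T.card_filter_toFinset_le_queriesIn _ fun c => c.2 = j)))

theorem mul_card_compromisedCol_le (j : Fin m) :
    n * (Finset.univ.filter fun ℓ : Fin m → Fin n =>
      compromisedCol n m ℓ (T.queryList (xhard n m _ ℓ)).toFinset j).card ≤
    4 * ∑ ℓ, T.queriesIn (xhard n m _ ℓ) {c | c.2 = j} := by
  rcases Nat.eq_zero_or_pos n with rfl | hn
  · simp
  refine Nat.le_of_mul_le_mul_left ?_ hn
  have hsum := Finset.sum_le_sum fun ℓ (_ : ℓ ∈ Finset.univ) =>
    mul_card_compromisedCol_update_le T ℓ j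
  simp only [← Finset.mul_sum, Finset.card_filter] at hsum ⊢
  rw [sum_sum_update (fun ℓ =>
      if compromisedCol n m ℓ (T.queryList (xhard n m _ ℓ)).toFinset j then 1 else 0) j,
    sum_sum_update (fun ℓ => T.queriesIn (xhard n m _ ℓ) {c | c.2 = j}) j] at hsum
  simp only [Fintype.card_fin, smul_eq_mul] at hsum
  linarith

theorem mul_sum_card_compromisedCol_le :
    n * ∑ ℓ : Fin m → Fin n, (Finset.univ.filter fun j =>
      compromisedCol n m ℓ (T.queryList (xhard n m _ ℓ)).toFinset j).card ≤
    4 * ∑ ℓ, T.cost (xhard n m _ ℓ) := by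
  simp only [← T.sum_queriesIn_fiber _ Prod.snd, Finset.card_filter]
  rw [Finset.sum_comm, Finset.mul_sum, Finset.sum_comm, Finset.mul_sum]
  simp only [← Finset.card_filter]
  exact Finset.sum_le_sum fun j _ => mul_card_compromisedCol_le T j

end Counting

section LowerBound

variable {n m : ℕ} {T : DTree (Fin n × Fin m) (PSym n m (Fin n × Fin m))}

theorem le_card_compromisedCol (hn : 10 ≤ n) (hm : 2 ≤ m) (hme : Even m)
    (hT : T.Computes (gFun n m)) (ℓ : Fin m → Fin n) :
    m / 2 ≤ (Finset.univ.filter fun j =>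
      compromisedCol n m ℓ (T.queryList (xhard n m _ ℓ)).toFinset j).card := by
  by_contra! h
  obtain ⟨y, hy, hgy⟩ := exists_gFun_eq_true_of_card_compromisedCol_lt hn hm hme h
  have heval : T.eval y = T.eval (xhard n m _ ℓ) :=
    T.eval_eq_of_agree fun c hc => hy c (List.mem_toFinset.mpr hc)
  rw [hT, hT, hgy, gFun_xhard] at heval
  exact Bool.noConfusion heval

theorem mul_mul_card_le_sum_cost (hn : 10 ≤ n) (hm : 2 ≤ m) (hme : Even m)
    (hT : T.Computes (gFun n m)) :
    n * m * Fintype.card (Fin m → Fin n) ≤ 8 * ∑ ℓ, T.cost (xhard n m _ ℓ) := by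
  have hsum := Finset.sum_le_sum fun ℓ (_ : ℓ ∈ Finset.univ) =>
    le_card_compromisedCol hn hm hme hT ℓ
  rw [Finset.sum_const, Finset.card_univ, smul_eq_mul] at hsum
  have := (Nat.mul_le_mul_left n hsum).trans (mul_sum_card_compromisedCol_le T)
  obtain ⟨k, rfl⟩ := hme
  rw [show (k + k) / 2 = k by omega] at this
  nlinarith

theorem div_le_R0query_gFun (hn : 10 ≤ n) (hm : 2 ≤ m) (hme : Even m) :
    (n * m : ℝ≥0∞) / 8 ≤ R0query (gFun n m) := by
  have : Nonempty (Fin m → Fin n) := ⟨fun _ => ⟨0, by omega⟩⟩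
  refine le_R0query_of_forall_computes (xhard n m _) _ fun T hT => ?_
  rw [← mul_div_assoc, ENNReal.div_le_iff (by norm_num) (by norm_num)]
  calc (Fintype.card (Fin m → Fin n) : ℝ≥0∞) * (n * m) =
        (n * m * Fintype.card (Fin m → Fin n) : ℕ) := by push_cast; ring
    _ ≤ (8 * ∑ ℓ, T.cost (xhard n m _ ℓ) : ℕ) :=
        Nat.cast_le.mpr (mul_mul_card_le_sum_cost hn hm hme hT)
    _ = (∑ ℓ, (T.cost (xhard n m _ ℓ) : ℝ≥0∞)) * 8 := by push_cast; ring

end LowerBound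

/-- `R0(g_{n,m}) = Ω(n·m)`. -/
theorem statement4 :
    ∃ c : ℝ, 0 < c ∧ ∃ N : ℕ, ∀ n m : ℕ, N ≤ n → N ≤ m → Even m →
      ENNReal.ofReal (c * n * m) ≤ R0query (gFun n m) := by
  refine ⟨1 / 8, by norm_num, 10, fun n m hn hm hme => ?_⟩
  have hofReal : ENNReal.ofReal (1 / 8 * n * m) = (n * m : ℝ≥0∞) / 8 := by
    rw [show (1 / 8 : ℝ) * n * m = ((n * m : ℕ) : ℝ) / 8 by push_cast; ring,
      ENNReal.ofReal_div_of_pos (by norm_num), ENNReal.ofReal_natCast, ENNReal.ofReal_ofNat]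
    push_cast
    rfl
  rw [hofReal]
  exact div_le_R0query_gFun hn (by omega) hme
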